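/- arXiv:2306.02745 — 2 statements merged into one kernel-verified Lean document; each statement's English description precedes it below -/
import Mathlib

section
/- There exists a Hilbert space H and a sequence of closed subspaces V_n = (C x_n)^⊥ (orthogonal complements of unit vectors x_n) whose strong limit is (C x_0)^⊥ for a unit vector x_0, but the orthogonal projections onto V_n do not converge strongly to the projection onto (C x_0)^⊥. Concretely: if x_n = x_0 for n odd and x_n = y_n for n even, where y_n → 0 weakly with ||y_n|| = 1, then the strong limit of {V_n} is (C x_0)^⊥ while P_n x_0 does not converge. -/
open Filter Topology
open scoped InnerProductSpace

/-- The strong limit of a sequence of subspaces. -/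
def strongLimit {H : Type*} [NormedAddCommGroup H] [InnerProductSpace ℂ H]
    (V : ℕ → Submodule ℂ H) : Set H :=
  {x | ∃ u : ℕ → H, (∀ n, u n ∈ V n) ∧ Tendsto u atTop (𝓝 x)}

/-- `P` is the orthogonal projection onto `V`. -/
def IsOrthProj {H : Type*} [NormedAddCommGroup H] [InnerProductSpace ℂ H]
    (V : Submodule ℂ H) (P : H →L[ℂ] H) : Prop :=
  ∀ x : H, P x ∈ V ∧ x - P x ∈ Vᗮ

/-!
Since `x₀` and the `y n` are unit vectors, `P n z = z - ⟪x n, z⟫ • x n`. Every `V n` with `n` odd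
is `(ℂ ∙ x₀)ᗮ`, which is closed, so the strong limit lies in it; conversely, for `z ⊥ x₀` the
points `P n z ∈ V n` tend to `z` because `⟪x n, z⟫` vanishes for odd `n` and tends to `0` along
even `n` by weak convergence. Finally `P n x₀` is `0` for odd `n`, while for even `n` it tends to
`x₀ ≠ 0`, again by weak convergence.
-/

section OrthogonalUnitSingleton

variable {H : Type*} [NormedAddCommGroup H] [InnerProductSpace ℂ H]

theorem IsOrthProj.apply_eq_starProjection {V : Submodule ℂ H} [V.HasOrthogonalProjection]
    {P : H →L[ℂ] H} (hP : IsOrthProj V P) (z : H) : P z = V.starProjection z :=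
  (V.eq_starProjection_of_mem_orthogonal (hP z).1 (hP z).2).symm

theorem starProjection_orthogonal_unit_singleton {v : H} (hv : ‖v‖ = 1) (z : H) :
    (ℂ ∙ v)ᗮ.starProjection z = z - ⟪v, z⟫_ℂ • v := by
  rw [Submodule.starProjection_orthogonal_val, Submodule.starProjection_unit_singleton ℂ hv]

theorem IsOrthProj.apply_of_orthogonal_unit_singleton {v : H} (hv : ‖v‖ = 1) {P : H →L[ℂ] H}
    (hP : IsOrthProj (ℂ ∙ v)ᗮ P) (z : H) : P z = z - ⟪v, z⟫_ℂ • v := by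
  rw [hP.apply_eq_starProjection, starProjection_orthogonal_unit_singleton hv]

theorem sub_inner_smul_mem_orthogonal_unit_singleton {v : H} (hv : ‖v‖ = 1) (z : H) :
    z - ⟪v, z⟫_ℂ • v ∈ (ℂ ∙ v)ᗮ := by
  rw [← starProjection_orthogonal_unit_singleton hv]
  exact Submodule.coe_mem _

theorem tendsto_sub_inner_smul_self {ι : Type*} {l : Filter ι} {v : ι → H} (hv : ∀ i, ‖v i‖ = 1)
    {z : H} (h : Tendsto (fun i => ⟪v i, z⟫_ℂ) l (𝓝 0)) :
    Tendsto (fun i => z - ⟪v i, z⟫_ℂ • v i) l (𝓝 z) := by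
  have hbdd : IsBoundedUnder (· ≤ ·) l (norm ∘ v) := ⟨1, eventually_map.2 (by simp [hv])⟩
  simpa using tendsto_const_nhds.sub (h.zero_smul_isBoundedUnder_le hbdd)

theorem strongLimit_subset_of_frequently {V : ℕ → Submodule ℂ H} {W : Set H} (hW : IsClosed W)
    (h : ∃ᶠ n in atTop, (V n : Set H) ⊆ W) : strongLimit V ⊆ W := by
  rintro z ⟨u, hu, hlim⟩
  exact hW.mem_of_frequently_of_tendsto (h.mono fun n hn => hn (hu n)) hlim

theorem mem_strongLimit_orthogonal_unit_singleton {v : ℕ → H} (hv : ∀ n, ‖v n‖ = 1) {z : H}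
    (h : Tendsto (fun n => ⟪v n, z⟫_ℂ) atTop (𝓝 0)) :
    z ∈ strongLimit fun n => (ℂ ∙ v n)ᗮ :=
  ⟨_, fun n => sub_inner_smul_mem_orthogonal_unit_singleton (hv n) z,
    tendsto_sub_inner_smul_self hv h⟩

end OrthogonalUnitSingleton

theorem not_tendsto_of_tendsto_odd_of_tendsto_even {X : Type*} [TopologicalSpace X] [T2Space X]
    {f : ℕ → X} {a b : X} (hab : a ≠ b) (hodd : Tendsto (fun k => f (2 * k + 1)) atTop (𝓝 a))
    (heven : Tendsto (fun k => f (2 * k)) atTop (𝓝 b)) : ¬ ∃ L, Tendsto f atTop (𝓝 L) := by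
  rintro ⟨L, hL⟩
  have hodd' := hL.comp ((strictMono_mul_left_of_pos two_pos).add_const 1).tendsto_atTop
  have heven' := hL.comp (strictMono_mul_left_of_pos two_pos).tendsto_atTop
  exact hab ((tendsto_nhds_unique hodd hodd').trans (tendsto_nhds_unique heven' heven))

theorem stmt3_general {H : Type*} [NormedAddCommGroup H] [InnerProductSpace ℂ H]
    (x₀ : H) (hx₀ : ‖x₀‖ = 1) (y : ℕ → H) (hy : ∀ n, ‖y n‖ = 1)
    (hyweak : ∀ z : H, Tendsto (fun n => ⟪z, y n⟫_ℂ) atTop (𝓝 0))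
    (x : ℕ → H) (hxodd : ∀ n, Odd n → x n = x₀) (hxeven : ∀ n, Even n → x n = y n)
    (V : ℕ → Submodule ℂ H) (hV : ∀ n, V n = (ℂ ∙ x n)ᗮ)
    (P : ℕ → (H →L[ℂ] H)) (hP : ∀ n, IsOrthProj (V n) (P n)) :
    strongLimit V = (((ℂ ∙ x₀)ᗮ : Submodule ℂ H) : Set H) ∧
      ¬ ∃ L : H, Tendsto (fun n => P n x₀) atTop (𝓝 L) := by
  have hx : ∀ n, ‖x n‖ = 1 := fun n =>
    (Nat.even_or_odd n).elim (fun h => hxeven n h ▸ hy n) (fun h => hxodd n h ▸ hx₀)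
  obtain rfl : V = fun n => (ℂ ∙ x n)ᗮ := funext hV
  refine ⟨subset_antisymm ?_ fun z hz => ?_, ?_⟩
  · refine strongLimit_subset_of_frequently (Submodule.isClosed_orthogonal _)
      (frequently_atTop.2 fun n => ⟨2 * n + 1, by omega, ?_⟩)
    rw [hxodd _ (odd_two_mul_add_one n)]
  · refine mem_strongLimit_orthogonal_unit_singleton hx
      (squeeze_zero_norm (fun n => ?_) (tendsto_zero_iff_norm_tendsto_zero.1 (hyweak z)))
    rcases Nat.even_or_odd n with h | h
    · rw [hxeven n h, norm_inner_symm]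
    · rw [hxodd n h, Submodule.mem_orthogonal_singleton_iff_inner_right.1 hz, norm_zero]
      exact norm_nonneg _
  · have hPx := fun n => (hP n).apply_of_orthogonal_unit_singleton (hx n) x₀
    refine not_tendsto_of_tendsto_odd_of_tendsto_even (a := 0) (b := x₀) (ne_zero_of_norm_ne_zero
      (hx₀.trans_ne one_ne_zero)).symm ?_ ?_
    · refine tendsto_const_nhds.congr fun k => ?_
      rw [hPx, hxodd _ (odd_two_mul_add_one k), inner_self_eq_one_of_norm_eq_one hx₀, one_smul,
        sub_self]
    · have hyx₀ : Tendsto (fun n => ⟪y n, x₀⟫_ℂ) atTop (𝓝 0) :=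
        tendsto_zero_iff_norm_tendsto_zero.2 <|
          (tendsto_zero_iff_norm_tendsto_zero.1 (hyweak x₀)).congr fun n => norm_inner_symm _ _
      refine (tendsto_sub_inner_smul_self (fun k => hy (2 * k))
        (hyx₀.comp (strictMono_mul_left_of_pos two_pos).tendsto_atTop)).congr fun k => ?_
      rw [hPx, hxeven _ (even_two_mul k)]

theorem stmt3 {H : Type*} [NormedAddCommGroup H] [InnerProductSpace ℂ H] [CompleteSpace H]
    (x₀ : H) (hx₀ : ‖x₀‖ = 1) (y : ℕ → H) (hy : ∀ n, ‖y n‖ = 1)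
    (hyweak : ∀ z : H, Tendsto (fun n => ⟪z, y n⟫_ℂ) atTop (𝓝 0))
    (x : ℕ → H) (hxodd : ∀ n, Odd n → x n = x₀) (hxeven : ∀ n, Even n → x n = y n)
    (V : ℕ → Submodule ℂ H) (hV : ∀ n, V n = (ℂ ∙ x n)ᗮ)
    (P : ℕ → (H →L[ℂ] H)) (hP : ∀ n, IsOrthProj (V n) (P n)) :
    strongLimit V = (((ℂ ∙ x₀)ᗮ : Submodule ℂ H) : Set H) ∧
      ¬ ∃ L : H, Tendsto (fun n => P n x₀) atTop (𝓝 L) :=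
  stmt3_general x₀ hx₀ y hy hyweak x hxodd hxeven V hV P hP
end

section
/- Let U_n, U be partial isometries on a separable Hilbert space H with initial spaces H_+^n, H_+ respectively (i.e. U_n is isometric on H_+^n and zero on its orthogonal complement), where dim H_+^n = dim H_+ = k < ∞. If U_n → U strongly, then for every φ_+ ∈ H_+ there exists a sequence φ_+^n ∈ H_+^n with φ_+^n → φ_+ and U_n φ_+^n → U φ_+. -/
/-! The sequence `φ_n := P_n φ` of projections onto the initial spaces works: `U_n` kills
`φ - φ_n`, so `U_n φ_n = U_n φ → U φ`, and hence `‖φ_n‖ = ‖U_n φ‖ → ‖U φ‖ = ‖φ‖`. By Pythagoras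
`‖φ - φ_n‖² = ‖φ‖² - ‖φ_n‖² → 0`. -/

open Filter Topology

/-- `U` is a partial isometry with initial space `V`: it is isometric on `V`
and vanishes on `Vᗮ`. -/
def IsPartialIsometryWithInitial {H : Type*} [NormedAddCommGroup H] [InnerProductSpace ℂ H]
    (U : H →L[ℂ] H) (V : Submodule ℂ H) : Prop :=
  (∀ x ∈ V, ‖U x‖ = ‖x‖) ∧ ∀ x ∈ Vᗮ, U x = 0

theorem Submodule.tendsto_starProjection_of_tendsto_norm {𝕜 E ι : Type*} [RCLike 𝕜]
    [NormedAddCommGroup E] [InnerProductSpace 𝕜 E] {l : Filter ι} (K : ι → Submodule 𝕜 E)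
    [∀ i, (K i).HasOrthogonalProjection] (x : E)
    (h : Tendsto (fun i => ‖(K i).starProjection x‖) l (𝓝 ‖x‖)) :
    Tendsto (fun i => (K i).starProjection x) l (𝓝 x) := by
  have hpyth : ∀ i, ‖(K i).starProjection x - x‖ =
      Real.sqrt (‖x‖ ^ 2 - ‖(K i).starProjection x‖ ^ 2) := fun i => by
    rw [(K i).norm_sq_eq_add_norm_sq_starProjection x, Submodule.starProjection_orthogonal_val,
      norm_sub_rev, add_sub_cancel_left, Real.sqrt_sq (norm_nonneg _)]
  rw [tendsto_iff_norm_sub_tendsto_zero]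
  simp only [hpyth]
  have := ((tendsto_const_nhds (x := ‖x‖ ^ 2)).sub (h.pow 2)).sqrt
  rwa [sub_self, Real.sqrt_zero] at this

namespace IsPartialIsometryWithInitial

variable {H : Type*} [NormedAddCommGroup H] [InnerProductSpace ℂ H]
  {U : H →L[ℂ] H} {V : Submodule ℂ H}

theorem apply_starProjection (hU : IsPartialIsometryWithInitial U V)
    [V.HasOrthogonalProjection] (x : H) : U (V.starProjection x) = U x := by
  have h := hU.2 _ (V.sub_starProjection_mem_orthogonal x)
  rwa [map_sub, sub_eq_zero, eq_comm] at h

theorem norm_starProjection (hU : IsPartialIsometryWithInitial U V)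
    [V.HasOrthogonalProjection] (x : H) : ‖V.starProjection x‖ = ‖U x‖ := by
  rw [← hU.apply_starProjection, hU.1 _ (V.starProjection_apply_mem x)]

end IsPartialIsometryWithInitial

theorem stmt12_general {H : Type*} [NormedAddCommGroup H] [InnerProductSpace ℂ H]
    (Un : ℕ → (H →L[ℂ] H)) (Hpn : ℕ → Submodule ℂ H)
    (hUn : ∀ n, IsPartialIsometryWithInitial (Un n) (Hpn n))
    (hfinn : ∀ n, FiniteDimensional ℂ (Hpn n))
    (U : H →L[ℂ] H) (Hp : Submodule ℂ H)
    (hU : IsPartialIsometryWithInitial U Hp)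
    (hconv : ∀ x : H, Tendsto (fun n => Un n x) atTop (𝓝 (U x))) :
    ∀ φ ∈ Hp, ∃ u : ℕ → H, (∀ n, u n ∈ Hpn n) ∧
      Tendsto u atTop (𝓝 φ) ∧ Tendsto (fun n => Un n (u n)) atTop (𝓝 (U φ)) := by
  intro φ hφ
  refine ⟨fun n => (Hpn n).starProjection φ, fun n => (Hpn n).starProjection_apply_mem φ,
    Submodule.tendsto_starProjection_of_tendsto_norm Hpn φ ?_, ?_⟩
  · simpa only [(hUn _).norm_starProjection, hU.1 φ hφ] using (hconv φ).norm
  · simpa only [(hUn _).apply_starProjection] using hconv φ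

theorem stmt12 {H : Type*} [NormedAddCommGroup H] [InnerProductSpace ℂ H] [CompleteSpace H]
    [TopologicalSpace.SeparableSpace H] (k : ℕ)
    (Un : ℕ → (H →L[ℂ] H)) (Hpn : ℕ → Submodule ℂ H)
    (hUn : ∀ n, IsPartialIsometryWithInitial (Un n) (Hpn n))
    (hdimn : ∀ n, Module.finrank ℂ (Hpn n) = k) (hfinn : ∀ n, FiniteDimensional ℂ (Hpn n))
    (U : H →L[ℂ] H) (Hp : Submodule ℂ H)
    (hU : IsPartialIsometryWithInitial U Hp)
    (hdim : Module.finrank ℂ Hp = k) (hfin : FiniteDimensional ℂ Hp)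
    (hconv : ∀ x : H, Tendsto (fun n => Un n x) atTop (𝓝 (U x))) :
    ∀ φ ∈ Hp, ∃ u : ℕ → H, (∀ n, u n ∈ Hpn n) ∧
      Tendsto u atTop (𝓝 φ) ∧ Tendsto (fun n => Un n (u n)) atTop (𝓝 (U φ)) :=
  stmt12_general Un Hpn hUn hfinn U Hp hU hconv
end
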